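/- Let D ⊆ 2^{<ω} be a prefix-free set of nonempty binary strings with Σ_{σ∈D} 2^{-|σ|} = 1, and define the tree-shift T_D : 2^ω → 2^ω by T_D(σ⌢Y) = Y whenever σ ∈ D (well-defined since D is prefix-free), and T_D(X) = X when no initial segment of X belongs to D. Then T_D is measure-preserving with respect to the uniform measure λ and is ergodic with respect to λ. -/

import Mathlib

open Filter MeasureTheory

/-- The length-`n` initial segment of `X ∈ 2^ω`, as a finite binary string. -/
def seg (X : ℕ → Bool) (n : ℕ) : List Bool := (List.range n).map X

/-- The cylinder `⟦σ⟧` of all sequences extending the string `σ`. -/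
def cyl (σ : List Bool) : Set (ℕ → Bool) := {X | seg X σ.length = σ}

/-- `D ⊆ 2^{<ω}` is prefix-free: no element is a proper initial segment of another. -/
def PrefixFree (D : Set (List Bool)) : Prop :=
  ∀ σ ∈ D, ∀ τ ∈ D, σ <+: τ → σ = τ

open scoped Classical in
/-- The tree-shift `T_D`: if some initial segment of `X` lies in `D` (for
prefix-free `D` it is unique), remove it; otherwise leave `X` unchanged.
So `T_D (σ⌢Y) = Y` for `σ ∈ D`. -/
noncomputable def treeShift (D : Set (List Bool)) (X : ℕ → Bool) : ℕ → Bool :=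
  if h : ∃ n, seg X n ∈ D then (fun i => X (Nat.find h + i)) else X

/-!
On a cylinder `⟦σ⟧` with `σ ∈ D` the tree-shift is the ordinary shift by `|σ|`, and the uniform
measure scales: `λ(⟦σ⟧ ∩ shift_{|σ|}⁻¹ S) = 2^{-|σ|} λ(S)`. The cylinders `⟦σ⟧`, `σ ∈ D`, are
disjoint and cover a set of measure `Σ 2^{-|σ|} = 1`, so `T_D` preserves `λ`.

Iterating, `T_Dⁿ` is the shift by `|w|` on each cylinder `⟦w⟧` with `w ∈ Dⁿ`, and these cylinders
again cover almost everything. Hence a `T_D`-invariant set `A` satisfies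
`λ(⟦w⟧ ∩ A) = λ(⟦w⟧) λ(A)` for all such `w`. Since words in `Dⁿ` have length at least `n`, every
cylinder `⟦τ⟧` is, up to a null set, a disjoint union of cylinders `⟦w⟧` with `w ∈ D^{|τ|}`; so `A`
is independent of every measurable set, in particular of itself, and `λ(A) ∈ {0, 1}`.
-/

def shift (n : ℕ) (X : ℕ → Bool) : ℕ → Bool := fun i => X (n + i)

lemma measurable_shift (n : ℕ) : Measurable (shift n) :=
  measurable_pi_lambda _ fun i => measurable_pi_apply (n + i)

@[simp] lemma shift_zero : shift 0 = id := by
  funext X i; simp [shift]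

lemma shift_shift (m n : ℕ) (X : ℕ → Bool) : shift n (shift m X) = shift (m + n) X := by
  funext i; simp [shift, Nat.add_assoc]

section Cylinders

@[simp] lemma length_seg (X : ℕ → Bool) (n : ℕ) : (seg X n).length = n := by simp [seg]

lemma seg_eq_ofFn (X : ℕ → Bool) (n : ℕ) : seg X n = List.ofFn fun i : Fin n => X i := by
  simp [seg, List.ofFn_eq_map, ← List.map_coe_finRange_eq_range, Function.comp_def]

lemma seg_add (X : ℕ → Bool) (m k : ℕ) : seg X (m + k) = seg X m ++ seg (shift m X) k := by
  simp [seg, shift, List.range_add, Function.comp_def]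

lemma seg_prefix_seg (X : ℕ → Bool) {m n : ℕ} (h : m ≤ n) : seg X m <+: seg X n := by
  obtain ⟨k, rfl⟩ := Nat.exists_eq_add_of_le h
  exact ⟨_, (seg_add X m k).symm⟩

lemma mem_cyl {σ : List Bool} {X : ℕ → Bool} : X ∈ cyl σ ↔ seg X σ.length = σ := Iff.rfl

@[simp] lemma cyl_nil : cyl [] = Set.univ := by
  ext X; simp [mem_cyl, seg]

lemma cyl_append (w τ : List Bool) : cyl (w ++ τ) = cyl w ∩ shift w.length ⁻¹' cyl τ := by
  ext X
  simp only [Set.mem_inter_iff, Set.mem_preimage, mem_cyl, List.length_append, seg_add]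
  exact ⟨fun h => List.append_inj h (by simp), fun ⟨h₁, h₂⟩ => by rw [h₁, h₂]⟩

lemma cyl_subset_cyl {τ w : List Bool} (h : τ <+: w) : cyl w ⊆ cyl τ := by
  obtain ⟨r, rfl⟩ := h
  rw [cyl_append]
  exact Set.inter_subset_left

lemma prefix_of_mem_cyl {σ τ : List Bool} {X : ℕ → Bool} (hσ : X ∈ cyl σ) (hτ : X ∈ cyl τ)
    (h : σ.length ≤ τ.length) : σ <+: τ := by
  rw [mem_cyl] at hσ hτ
  rw [← hσ, ← hτ]
  exact seg_prefix_seg X h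

lemma cyl_inter_cyl_of_length_le {τ w : List Bool} (h : τ.length ≤ w.length) :
    cyl w ∩ cyl τ = if τ <+: w then cyl w else ∅ := by
  split_ifs with hτw
  · exact Set.inter_eq_left.mpr (cyl_subset_cyl hτw)
  · exact Set.eq_empty_of_forall_notMem fun X ⟨hw, hτ⟩ => hτw (prefix_of_mem_cyl hτ hw h)

lemma pairwise_disjoint_cyl {P : Set (List Bool)} (hP : PrefixFree P) :
    Pairwise (Function.onFun Disjoint fun σ : P => cyl σ) := by
  rintro ⟨σ, hσ⟩ ⟨τ, hτ⟩ hne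
  refine Set.disjoint_left.mpr fun X h₁ h₂ => hne (Subtype.ext ?_)
  rcases le_total σ.length τ.length with h | h
  · exact hP σ hσ τ hτ (prefix_of_mem_cyl h₁ h₂ h)
  · exact (hP τ hτ σ hσ (prefix_of_mem_cyl h₂ h₁ h)).symm

lemma measurableSet_seg_mem (n : ℕ) (S : Set (List Bool)) :
    MeasurableSet {X : ℕ → Bool | seg X n ∈ S} := by
  have hrestrict : Measurable fun (X : ℕ → Bool) (i : Fin n) => X i :=
    measurable_pi_lambda _ fun i => measurable_pi_apply _
  convert hrestrict (Set.to_countable {f : Fin n → Bool | List.ofFn f ∈ S}).measurableSet using 1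
  ext X
  simp [seg_eq_ofFn]

lemma measurableSet_cyl (σ : List Bool) : MeasurableSet (cyl σ) :=
  measurableSet_seg_mem σ.length {σ}

lemma isPiSystem_cyl : IsPiSystem (Set.range cyl) := by
  rintro _ ⟨σ, rfl⟩ _ ⟨τ, rfl⟩ ⟨X, hσ, hτ⟩
  rcases le_total σ.length τ.length with h | h
  · rw [Set.inter_eq_right.mpr (cyl_subset_cyl (prefix_of_mem_cyl hσ hτ h))]
    exact ⟨τ, rfl⟩
  · rw [Set.inter_eq_left.mpr (cyl_subset_cyl (prefix_of_mem_cyl hτ hσ h))]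
    exact ⟨σ, rfl⟩

lemma generateFrom_cyl : MeasurableSpace.pi = MeasurableSpace.generateFrom (Set.range cyl) := by
  refine le_antisymm ?_ (MeasurableSpace.generateFrom_le ?_)
  · have hcoord (i : ℕ) :
        Measurable[MeasurableSpace.generateFrom (Set.range cyl)] fun X : ℕ → Bool => X i := by
      refine measurable_to_bool ?_
      have hpre : (fun X : ℕ → Bool => X i) ⁻¹' {true} =
          ⋃ σ : {σ : List Bool // σ.length = i}, cyl (σ ++ [true]) := by
        ext X
        simp only [Set.mem_preimage, Set.mem_singleton_iff, Set.mem_iUnion, cyl_append,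
          Set.mem_inter_iff]
        constructor
        · intro h
          exact ⟨⟨seg X i, length_seg X i⟩, by simp [mem_cyl], by simp [mem_cyl, seg, shift, h]⟩
        · rintro ⟨⟨σ, rfl⟩, -, h⟩
          simpa [mem_cyl, seg, shift] using h
      rw [hpre]
      exact MeasurableSet.iUnion fun σ => MeasurableSpace.measurableSet_generateFrom ⟨_, rfl⟩
    exact iSup_le fun i => (hcoord i).comap_le
  · rintro _ ⟨σ, rfl⟩
    exact measurableSet_cyl σ

end Cylinders

lemma measure_eq_tsum_cyl_inter {ν : Measure (ℕ → Bool)} {P : Set (List Bool)}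
    (hP : PrefixFree P) (hcover : ∀ᵐ X ∂ν, X ∈ ⋃ σ : P, cyl σ) {s : Set (ℕ → Bool)}
    (hs : MeasurableSet s) : ν s = ∑' σ : P, ν (cyl σ ∩ s) := by
  rw [← measure_inter_conull (ae_iff.mp hcover), Set.inter_comm, Set.iUnion_inter]
  exact measure_iUnion ((pairwise_disjoint_cyl hP).mono fun _ _ h =>
    h.mono Set.inter_subset_left Set.inter_subset_left) fun σ => (measurableSet_cyl σ).inter hs

section UniformMeasure

variable {lam : Measure (ℕ → Bool)}
  (hlam : ∀ σ : List Bool, lam (cyl σ) = (1 / 2 : ENNReal) ^ σ.length)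
include hlam

lemma measure_cyl_inter_shift_preimage [IsFiniteMeasure lam] (w : List Bool)
    {S : Set (ℕ → Bool)} (hS : MeasurableSet S) :
    lam (cyl w ∩ shift w.length ⁻¹' S) = (1 / 2 : ENNReal) ^ w.length * lam S := by
  have hmap {S : Set (ℕ → Bool)} (hS : MeasurableSet S) :
      (lam.restrict (cyl w)).map (shift w.length) S = lam (cyl w ∩ shift w.length ⁻¹' S) := by
    rw [Measure.map_apply (measurable_shift _) hS,
      Measure.restrict_apply (measurable_shift _ hS), Set.inter_comm]
  have hscale :
      (lam.restrict (cyl w)).map (shift w.length) = (1 / 2 : ENNReal) ^ w.length • lam := by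
    refine ext_of_generate_finite _ generateFrom_cyl isPiSystem_cyl ?_ ?_
    · rintro _ ⟨τ, rfl⟩
      rw [hmap (measurableSet_cyl τ), ← cyl_append, Measure.smul_apply, hlam, hlam,
        List.length_append, pow_add, smul_eq_mul]
    · rw [hmap MeasurableSet.univ, Measure.smul_apply, Set.preimage_univ, Set.inter_univ,
        ← cyl_nil, hlam, hlam, smul_eq_mul]
      simp
  rw [← hmap hS, hscale, Measure.smul_apply, smul_eq_mul]

lemma ae_mem_iUnion_cyl [IsProbabilityMeasure lam] {P : Set (List Bool)} (hP : PrefixFree P)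
    (hsum : ∑' σ : P, (1 / 2 : ENNReal) ^ (σ : List Bool).length = 1) :
    ∀ᵐ X ∂lam, X ∈ ⋃ σ : P, cyl σ := by
  have hmeas : MeasurableSet (⋃ σ : P, cyl σ) := MeasurableSet.iUnion fun σ => measurableSet_cyl σ
  rw [ae_iff, ← Set.compl_def, prob_compl_eq_zero_iff hmeas,
    measure_iUnion (pairwise_disjoint_cyl hP) fun σ => measurableSet_cyl σ]
  simpa only [hlam] using hsum

end UniformMeasure

lemma tsum_half_pow_eq_one_of_real {ι : Type*} {f : ι → ℕ}
    (h : ∑' i, ((1 : ℝ) / 2) ^ f i = 1) : ∑' i, (1 / 2 : ENNReal) ^ f i = 1 := by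
  have hsummable : Summable fun i => ((1 : ℝ) / 2) ^ f i := by
    by_contra hns
    rw [tsum_eq_zero_of_not_summable hns] at h
    exact zero_ne_one h
  have hcast (n : ℕ) : (1 / 2 : ENNReal) ^ n = ENNReal.ofReal (((1 : ℝ) / 2) ^ n) := by
    rw [ENNReal.ofReal_pow (by norm_num), ENNReal.ofReal_div_of_pos two_pos, ENNReal.ofReal_one,
      ENNReal.ofReal_ofNat]
  simp_rw [hcast, ← ENNReal.ofReal_tsum_of_nonneg (fun _ => by positivity) hsummable, h,
    ENNReal.ofReal_one]

section TreeShift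

open scoped Classical

variable {D : Set (List Bool)}

lemma treeShift_eq_shift (hpf : PrefixFree D) {σ : List Bool} (hσ : σ ∈ D) {X : ℕ → Bool}
    (hX : X ∈ cyl σ) : treeShift D X = shift σ.length X := by
  have hseg : seg X σ.length = σ := mem_cyl.mp hX
  have h : ∃ n, seg X n ∈ D := ⟨σ.length, by rwa [hseg]⟩
  have hfind : Nat.find h = σ.length := by
    have hle : Nat.find h ≤ σ.length := Nat.find_le (by rwa [hseg])
    have hpre : seg X (Nat.find h) <+: σ := by rw [← hseg]; exact seg_prefix_seg X hle
    simpa using congrArg List.length (hpf _ (Nat.find_spec h) σ hσ hpre)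
  simp only [treeShift, dif_pos h, hfind]
  rfl

lemma measurable_treeShift (D : Set (List Bool)) : Measurable (treeShift D) := by
  have hE : MeasurableSet {X : ℕ → Bool | ∃ n, seg X n ∈ D} := by
    simpa only [Set.ofPred_exists] using MeasurableSet.iUnion fun n => measurableSet_seg_mem n D
  have hfind : Measurable fun X : {X : ℕ → Bool // ∃ n, seg X n ∈ D} =>
      shift (Nat.find X.2) X.1 :=
    Measurable.find (fun n => (measurable_shift n).comp measurable_subtype_coe)
      (fun n => measurable_subtype_coe (measurableSet_seg_mem n D)) _
  exact Measurable.dite hfind measurable_subtype_coe hE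

theorem measurePreserving_treeShift {lam : Measure (ℕ → Bool)} [IsProbabilityMeasure lam]
    (hlam : ∀ σ : List Bool, lam (cyl σ) = (1 / 2 : ENNReal) ^ σ.length) (hpf : PrefixFree D)
    (hsum : ∑' σ : D, (1 / 2 : ENNReal) ^ (σ : List Bool).length = 1) :
    MeasurePreserving (treeShift D) lam lam := by
  refine ⟨measurable_treeShift D, Measure.ext fun s hs => ?_⟩
  have hcover := ae_mem_iUnion_cyl hlam hpf hsum
  have hpre : MeasurableSet (treeShift D ⁻¹' s) := measurable_treeShift D hs
  calc (lam.map (treeShift D)) s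
      = ∑' σ : D, lam (cyl σ ∩ treeShift D ⁻¹' s) := by
        rw [Measure.map_apply (measurable_treeShift D) hs,
          measure_eq_tsum_cyl_inter hpf hcover hpre]
    _ = ∑' σ : D, (1 / 2 : ENNReal) ^ (σ : List Bool).length * lam s := by
        refine tsum_congr fun ⟨σ, hσ⟩ => ?_
        rw [← measure_cyl_inter_shift_preimage hlam σ hs]
        congr 1
        ext X
        simp only [Set.mem_inter_iff, Set.mem_preimage]
        exact and_congr_right fun hX => by rw [treeShift_eq_shift hpf hσ hX]
    _ = lam s := by rw [ENNReal.tsum_mul_right, hsum, one_mul]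

end TreeShift

section Words

/-- `words D n = Dⁿ`. -/
def words (D : Set (List Bool)) : ℕ → Set (List Bool)
  | 0 => {[]}
  | n + 1 => {u | ∃ σ ∈ D, ∃ w ∈ words D n, u = σ ++ w}

variable {D : Set (List Bool)}

lemma prefixFree_words (hpf : PrefixFree D) (n : ℕ) : PrefixFree (words D n) := by
  induction n with
  | zero =>
    rintro σ rfl τ rfl -
    rfl
  | succ n ih =>
    rintro _ ⟨σ, hσ, w, hw, rfl⟩ _ ⟨σ', hσ', w', hw', rfl⟩ hpre
    obtain rfl : σ = σ' := by
      rcases List.prefix_or_prefix_of_prefix ((List.prefix_append σ w).trans hpre)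
        (List.prefix_append σ' w') with h | h
      · exact hpf σ hσ σ' hσ' h
      · exact (hpf σ' hσ' σ hσ h).symm
    rw [ih w hw w' hw' ((List.prefix_append_right_inj σ).mp hpre)]

lemma le_length_of_mem_words (hne : ∀ σ ∈ D, σ ≠ []) {n : ℕ} {w : List Bool}
    (hw : w ∈ words D n) : n ≤ w.length := by
  induction n generalizing w with
  | zero => exact Nat.zero_le _
  | succ n ih =>
    obtain ⟨σ, hσ, w, hw, rfl⟩ := hw
    have := List.length_pos_iff.mpr (hne σ hσ)
    grind [List.length_append]

lemma iterate_treeShift_eq_shift (hpf : PrefixFree D) {n : ℕ} {w : List Bool}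
    (hw : w ∈ words D n) {X : ℕ → Bool} (hX : X ∈ cyl w) :
    (treeShift D)^[n] X = shift w.length X := by
  induction n generalizing w X with
  | zero =>
    obtain rfl : w = [] := hw
    simp
  | succ n ih =>
    obtain ⟨σ, hσ, w, hw, rfl⟩ := hw
    rw [cyl_append] at hX
    rw [Function.iterate_succ_apply, treeShift_eq_shift hpf hσ hX.1, ih hw hX.2, shift_shift,
      List.length_append]

variable {lam : Measure (ℕ → Bool)} [IsProbabilityMeasure lam]
  (hlam : ∀ σ : List Bool, lam (cyl σ) = (1 / 2 : ENNReal) ^ σ.length) (hpf : PrefixFree D)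
  (hsum : ∑' σ : D, (1 / 2 : ENNReal) ^ (σ : List Bool).length = 1)
include hlam hpf hsum

lemma ae_mem_iUnion_words (n : ℕ) : ∀ᵐ X ∂lam, X ∈ ⋃ w : words D n, cyl w := by
  induction n with
  | zero => simp [words]
  | succ n ih =>
    -- a.e. `X` starts with some `σ ∈ D`, and a.e. `T_D X` lies in a cylinder of `Dⁿ`
    have hshift := (measurePreserving_treeShift hlam hpf hsum).quasiMeasurePreserving.ae ih
    filter_upwards [ae_mem_iUnion_cyl hlam hpf hsum, hshift] with X hX hTX
    obtain ⟨⟨σ, hσ⟩, hXσ⟩ := Set.mem_iUnion.mp hX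
    obtain ⟨⟨w, hw⟩, hTXw⟩ := Set.mem_iUnion.mp hTX
    rw [treeShift_eq_shift hpf hσ hXσ] at hTXw
    exact Set.mem_iUnion.mpr ⟨⟨σ ++ w, σ, hσ, w, hw, rfl⟩, by rw [cyl_append]; exact ⟨hXσ, hTXw⟩⟩

lemma measure_ext_of_cyl_words (hne : ∀ σ ∈ D, σ ≠ []) {ν₁ ν₂ : Measure (ℕ → Bool)}
    [IsFiniteMeasure ν₁] (h₁ : ν₁ ≪ lam) (h₂ : ν₂ ≪ lam)
    (h : ∀ n, ∀ w ∈ words D n, ν₁ (cyl w) = ν₂ (cyl w)) : ν₁ = ν₂ := by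
  have hcyl (τ : List Bool) : ν₁ (cyl τ) = ν₂ (cyl τ) := by
    have hcover := ae_mem_iUnion_words hlam hpf hsum τ.length
    rw [measure_eq_tsum_cyl_inter (prefixFree_words hpf _) (h₁.ae_le hcover) (measurableSet_cyl τ),
      measure_eq_tsum_cyl_inter (prefixFree_words hpf _) (h₂.ae_le hcover) (measurableSet_cyl τ)]
    refine tsum_congr fun ⟨w, hw⟩ => ?_
    rw [cyl_inter_cyl_of_length_le (le_length_of_mem_words hne hw)]
    split_ifs
    exacts [h _ w hw, by simp]
  refine ext_of_generate_finite _ generateFrom_cyl isPiSystem_cyl ?_ ?_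
  · rintro _ ⟨τ, rfl⟩
    exact hcyl τ
  · simpa using hcyl []

end Words

section Ergodicity

variable {D : Set (List Bool)} {lam : Measure (ℕ → Bool)} [IsProbabilityMeasure lam]
  (hlam : ∀ σ : List Bool, lam (cyl σ) = (1 / 2 : ENNReal) ^ σ.length) (hpf : PrefixFree D)
include hlam hpf

lemma measure_cyl_words_inter_of_invariant {A : Set (ℕ → Bool)} (hA : MeasurableSet A)
    (hinv : treeShift D ⁻¹' A = A) {n : ℕ} {w : List Bool} (hw : w ∈ words D n) :
    lam (cyl w ∩ A) = lam A * lam (cyl w) := by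
  have hA_shift : cyl w ∩ A = cyl w ∩ shift w.length ⁻¹' A := by
    ext X
    simp only [Set.mem_inter_iff, Set.mem_preimage]
    refine and_congr_right fun hX => ?_
    rw [← iterate_treeShift_eq_shift hpf hw hX, ← Set.mem_preimage,
      Function.IsFixedPt.preimage_iterate hinv n]
  rw [hA_shift, measure_cyl_inter_shift_preimage hlam w hA, hlam, mul_comm]

lemma measure_eq_zero_or_one_of_invariant (hne : ∀ σ ∈ D, σ ≠ [])
    (hsum : ∑' σ : D, (1 / 2 : ENNReal) ^ (σ : List Bool).length = 1)
    {A : Set (ℕ → Bool)} (hA : MeasurableSet A) (hinv : treeShift D ⁻¹' A = A) :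
    lam A = 0 ∨ lam A = 1 := by
  have hrestrict : lam.restrict A = lam A • lam :=
    measure_ext_of_cyl_words hlam hpf hsum hne Measure.restrict_le_self.absolutelyContinuous
      (Measure.AbsolutelyContinuous.rfl.smul_left _) fun n w hw => by
        rw [Measure.restrict_apply (measurableSet_cyl w), Measure.smul_apply, smul_eq_mul,
          measure_cyl_words_inter_of_invariant hlam hpf hA hinv hw]
  have hsq : lam A * lam A = lam A := by
    simpa [Measure.restrict_apply hA, eq_comm] using congrArg (· A) hrestrict
  by_cases h0 : lam A = 0
  · exact Or.inl h0
  · exact Or.inr ((ENNReal.mul_eq_left h0 (measure_ne_top lam A)).mp hsq)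

end Ergodicity

/-- For a prefix-free set `D` of nonempty strings with `Σ_{σ∈D} 2^{-|σ|} = 1`
and `λ` the uniform measure on `2^ω`, the tree-shift `T_D` is measure-preserving
and ergodic with respect to `λ`. -/
theorem stmt11 (D : Set (List Bool))
    (hne : ∀ σ ∈ D, σ ≠ ([] : List Bool))
    (hpf : PrefixFree D)
    (hsum : ∑' σ : D, ((1 : ℝ) / 2) ^ (σ : List Bool).length = 1)
    (lam : Measure (ℕ → Bool)) [IsProbabilityMeasure lam]
    (hlam : ∀ σ : List Bool, lam (cyl σ) = (1 / 2 : ENNReal) ^ σ.length) :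
    MeasurePreserving (treeShift D) lam lam ∧ Ergodic (treeShift D) lam := by
  have hsum' := tsum_half_pow_eq_one_of_real hsum
  have hmp := measurePreserving_treeShift hlam hpf hsum'
  refine ⟨hmp, hmp, ⟨fun A hA hinv => ?_⟩⟩
  rw [eventuallyConst_set', ae_eq_empty, ae_eq_univ, prob_compl_eq_zero_iff hA]
  exact measure_eq_zero_or_one_of_invariant hlam hpf hne hsum' hA hinv
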